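/- arXiv:2011.01697 — 3 statements merged into one kernel-verified Lean document; each statement's English description precedes it below -/
import Mathlib

section
/- The random dithering operator with s levels satisfies the variance bound E‖Q(x) − x‖² ≤ min{d/s², √d/s}·‖x‖² for all x ∈ R^d. -/
/-!
Write `aᵢ = s|xᵢ|/‖x‖`. For `x ≠ 0` the error in coordinate `i` is
`sign(xᵢ)·(‖x‖/s)·(⌊aᵢ + ξᵢ⌋ - aᵢ)`, and for `ξᵢ` uniform on `[0, 1]` the rounding error
`⌊a + ξ⌋ - a` equals `-p` with probability `1 - p` and `1 - p` with probability `p`, where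
`p = fract a`; its second moment is `p(1 - p) ≤ min{1, a}`. Hence the variance is at most
`(‖x‖/s)² ∑ᵢ min{1, aᵢ}`, and the sum is at most `d`, and also at most `s√d` because
`∑ᵢ |xᵢ| ≤ √d‖x‖` by Cauchy–Schwarz.
-/

open MeasureTheory Classical

/-- The random dithering quantizer with `s` levels:
`Q(x)ᵢ = sign(xᵢ)·‖x‖·(1/s)·⌊s|xᵢ|/‖x‖ + ξᵢ⌋`, with the convention `Q(0) = 0`. -/
noncomputable def ditQ (d s : ℕ) (x : EuclideanSpace ℝ (Fin d)) (ξ : Fin d → ℝ) :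
    EuclideanSpace ℝ (Fin d) :=
  WithLp.toLp 2 fun i => if x = 0 then 0 else
    Real.sign (x i) * ‖x‖ * (1 / (s : ℝ)) * (⌊(s : ℝ) * |x i| / ‖x‖ + ξ i⌋ : ℤ)

open Set

lemma Real.sign_mul_abs (y : ℝ) : Real.sign y * |y| = y := by
  rcases lt_trichotomy y 0 with hy | rfl | hy
  · rw [Real.sign_of_neg hy, abs_of_neg hy, neg_one_mul, neg_neg]
  · simp
  · rw [Real.sign_of_pos hy, abs_of_pos hy, one_mul]

lemma Real.sign_sq_le_one (y : ℝ) : Real.sign y ^ 2 ≤ 1 := by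
  rcases Real.sign_apply_eq y with h | h | h <;> norm_num [h]

section FloorRing

variable {R : Type*} [Field R] [LinearOrder R] [IsStrictOrderedRing R] [FloorRing R]

lemma Int.fract_mul_one_sub_fract_le_min {a : R} (ha : 0 ≤ a) :
    Int.fract a * (1 - Int.fract a) ≤ min 1 a := by
  have hp0 := Int.fract_nonneg a
  have hp1 := Int.fract_lt_one a
  have hpa : Int.fract a ≤ a := by
    rw [← Int.self_sub_floor]
    have : (0 : R) ≤ ⌊a⌋ := by exact_mod_cast Int.floor_nonneg.2 ha
    linarith
  exact le_min (by nlinarith) (by nlinarith)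

lemma abs_floor_add_sub_le_one (a : R) {t : R} (ht : t ∈ Icc (0 : R) 1) :
    |(⌊a + t⌋ : R) - a| ≤ 1 := by
  have := Int.floor_le (a + t)
  have := Int.lt_floor_add_one (a + t)
  rw [abs_le]
  constructor <;> linarith [ht.1, ht.2]

end FloorRing

lemma integrableOn_floor_add_sub_sq (a : ℝ) :
    IntegrableOn (fun t : ℝ => ((⌊a + t⌋ : ℝ) - a) ^ 2) (Icc 0 1) := by
  have hmeas : Measurable fun t : ℝ => ((⌊a + t⌋ : ℝ) - a) ^ 2 :=
    ((measurable_from_top.comp (measurable_const_add a).floor).sub_const a).pow_const 2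
  refine Measure.integrableOn_of_bounded (M := 1) measure_Icc_lt_top.ne
    hmeas.aestronglyMeasurable ?_
  filter_upwards [ae_restrict_mem measurableSet_Icc] with t ht
  rw [Real.norm_eq_abs, abs_pow, sq_le_one_iff₀ (abs_nonneg _)]
  exact abs_floor_add_sub_le_one a ht

lemma integral_floor_add_sub_sq (a : ℝ) :
    ∫ t in Icc (0 : ℝ) 1, ((⌊a + t⌋ : ℝ) - a) ^ 2 = Int.fract a * (1 - Int.fract a) := by
  set p := Int.fract a
  have hp0 : 0 ≤ p := Int.fract_nonneg a
  have hp1 : p < 1 := Int.fract_lt_one a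
  have hfloor : (⌊a⌋ : ℝ) = a - p := (Int.self_sub_fract a).symm
  have hlow : EqOn (fun t : ℝ => ((⌊a + t⌋ : ℝ) - a) ^ 2) (fun _ => p ^ 2) (Ico 0 (1 - p)) := by
    rintro t ⟨ht0, ht1⟩
    have : ⌊a + t⌋ = ⌊a⌋ := Int.floor_eq_iff.2 ⟨by linarith, by linarith⟩
    simp only [this, hfloor]
    ring
  have hhigh : EqOn (fun t : ℝ => ((⌊a + t⌋ : ℝ) - a) ^ 2) (fun _ => (1 - p) ^ 2)
      (Ico (1 - p) 1) := by
    rintro t ⟨ht0, ht1⟩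
    have : ⌊a + t⌋ = ⌊a⌋ + 1 := Int.floor_eq_iff.2 ⟨by push_cast; linarith, by push_cast; linarith⟩
    simp only [this, Int.cast_add, Int.cast_one, hfloor]
    ring
  have hint := (integrableOn_floor_add_sub_sq a).mono_set Ico_subset_Icc_self
  rw [integral_Icc_eq_integral_Ico, ← Ico_union_Ico_eq_Ico (b := 1 - p) (by linarith) (by linarith),
    setIntegral_union Ico_disjoint_Ico_same measurableSet_Ico
      (hint.mono_set (Ico_subset_Ico_right (by linarith)))
      (hint.mono_set (Ico_subset_Ico_left (by linarith))),
    setIntegral_congr_fun measurableSet_Ico hlow, setIntegral_congr_fun measurableSet_Ico hhigh,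
    setIntegral_const, setIntegral_const, Real.volume_real_Ico_of_le (by linarith),
    Real.volume_real_Ico_of_le (by linarith), smul_eq_mul, smul_eq_mul]
  ring

lemma integral_sum_comp_eval {ι E : Type*} [Fintype ι] [NormedAddCommGroup E] [NormedSpace ℝ E]
    {X : ι → Type*} [∀ i, MeasurableSpace (X i)] {μ : ∀ i, Measure (X i)}
    [∀ i, IsProbabilityMeasure (μ i)] {f : ∀ i, X i → E} (hf : ∀ i, Integrable (f i) (μ i)) :
    ∫ x, ∑ i, f i (x i) ∂Measure.pi μ = ∑ i, ∫ y, f i y ∂μ i := by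
  rw [integral_finsetSum _ fun i _ => integrable_comp_eval (hf i)]
  exact Finset.sum_congr rfl fun i _ => integral_comp_eval (hf i).aestronglyMeasurable

lemma sum_abs_le_sqrt_card_mul_norm {ι : Type*} [Fintype ι] (x : EuclideanSpace ℝ ι) :
    ∑ i, |x i| ≤ √(Fintype.card ι) * ‖x‖ := by
  simpa [EuclideanSpace.norm_eq] using
    Real.sum_mul_le_sqrt_mul_sqrt Finset.univ (fun _ => 1) (fun i => |x i|)

lemma sum_min_one_mul_abs_div_norm_le {ι : Type*} [Fintype ι] (x : EuclideanSpace ℝ ι)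
    {c : ℝ} (hc : 0 ≤ c) :
    ∑ i, min 1 (c * |x i| / ‖x‖) ≤ min (Fintype.card ι : ℝ) (c * √(Fintype.card ι)) := by
  refine le_min ?_ ?_
  · simpa using Finset.sum_le_sum fun i (_ : i ∈ Finset.univ) => min_le_left 1 (c * |x i| / ‖x‖)
  · calc ∑ i, min 1 (c * |x i| / ‖x‖)
        ≤ ∑ i, c * |x i| / ‖x‖ := Finset.sum_le_sum fun i _ => min_le_right _ _
      _ = (c * ∑ i, |x i|) / ‖x‖ := by rw [Finset.mul_sum, Finset.sum_div]
      _ ≤ c * √(Fintype.card ι) := by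
        refine div_le_of_le_mul₀ (norm_nonneg x) (by positivity) ?_
        rw [mul_assoc]
        exact mul_le_mul_of_nonneg_left (sum_abs_le_sqrt_card_mul_norm x) hc

lemma ditQ_zero (d s : ℕ) (ξ : Fin d → ℝ) : ditQ d s 0 ξ = 0 := by
  ext i
  simp [ditQ]

lemma ditQ_sub_apply {d s : ℕ} (hs : s ≠ 0) {x : EuclideanSpace ℝ (Fin d)} (hx : x ≠ 0)
    (ξ : Fin d → ℝ) (i : Fin d) :
    (ditQ d s x ξ - x) i = Real.sign (x i) * (‖x‖ / s) *
      ((⌊s * |x i| / ‖x‖ + ξ i⌋ : ℝ) - s * |x i| / ‖x‖) := by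
  have hx' : ‖x‖ ≠ 0 := norm_ne_zero_iff.2 hx
  have hs' : (s : ℝ) ≠ 0 := Nat.cast_ne_zero.2 hs
  conv_lhs => rw [PiLp.sub_apply, ← Real.sign_mul_abs (x i)]
  simp only [ditQ, hx, if_false]
  field_simp

lemma norm_ditQ_sub_sq {d s : ℕ} (hs : s ≠ 0) {x : EuclideanSpace ℝ (Fin d)} (hx : x ≠ 0)
    (ξ : Fin d → ℝ) :
    ‖ditQ d s x ξ - x‖ ^ 2 = ∑ i, (Real.sign (x i) * (‖x‖ / s)) ^ 2 *
      ((⌊s * |x i| / ‖x‖ + ξ i⌋ : ℝ) - s * |x i| / ‖x‖) ^ 2 := by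
  simp_rw [EuclideanSpace.real_norm_sq_eq, ditQ_sub_apply hs hx, mul_pow]

/-- Random dithering with `s` levels satisfies the variance bound
`E‖Q(x) − x‖² ≤ min{d/s², √d/s}·‖x‖²`, where `ξ` is uniform on `[0,1]^d`. -/
theorem ditQ_variance (d s : ℕ) (hs : 0 < s) (x : EuclideanSpace ℝ (Fin d)) :
    ∫ ξ in (Set.univ.pi fun _ : Fin d => Set.Icc (0 : ℝ) 1),
        ‖ditQ d s x ξ - x‖ ^ 2 ∂(volume : Measure (Fin d → ℝ))
      ≤ min ((d : ℝ) / (s : ℝ) ^ 2) (Real.sqrt d / s) * ‖x‖ ^ 2 := by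
  rcases eq_or_ne x 0 with rfl | hx
  · simp [ditQ_zero]
  set a : Fin d → ℝ := fun i => s * |x i| / ‖x‖
  have hrounding : ∀ i, Integrable (fun t => (Real.sign (x i) * (‖x‖ / s)) ^ 2 *
      ((⌊a i + t⌋ : ℝ) - a i) ^ 2) (volume.restrict (Icc 0 1)) :=
    fun i => (integrableOn_floor_add_sub_sq (a i)).const_mul _
  simp_rw [norm_ditQ_sub_sq hs.ne' hx, volume_pi, Measure.restrict_pi_pi]
  have : IsProbabilityMeasure (volume.restrict (Icc (0 : ℝ) 1)) := ⟨by simp⟩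
  rw [integral_sum_comp_eval hrounding]
  simp_rw [integral_const_mul, integral_floor_add_sub_sq]
  calc ∑ i, (Real.sign (x i) * (‖x‖ / s)) ^ 2 * (Int.fract (a i) * (1 - Int.fract (a i)))
      ≤ ∑ i, (‖x‖ / s) ^ 2 * min 1 (s * |x i| / ‖x‖) := by
        refine Finset.sum_le_sum fun i _ => mul_le_mul ?_
          (Int.fract_mul_one_sub_fract_le_min (by positivity))
          (mul_nonneg (Int.fract_nonneg _) (sub_nonneg.2 (Int.fract_lt_one _).le)) (by positivity)
        rw [mul_pow]
        exact mul_le_of_le_one_left (sq_nonneg _) (Real.sign_sq_le_one _)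
    _ ≤ (‖x‖ / s) ^ 2 * min (d : ℝ) (s * √d) := by
        rw [← Finset.mul_sum]
        gcongr
        simpa using sum_min_one_mul_abs_div_norm_le x (Nat.cast_nonneg s)
    _ = min ((d : ℝ) / (s : ℝ) ^ 2) (Real.sqrt d / s) * ‖x‖ ^ 2 := by
        rw [mul_min_of_nonneg _ _ (by positivity), min_mul_of_nonneg _ _ (by positivity)]
        congr 1 <;> field_simp
end

section
/- Let H, X ∈ R^{d×n} and H⁺ = H + α Q(X − H) where Q is applied (columnwise) as an unbiased random operator with E‖Q(v)−v‖² ≤ ω‖v‖², and α = 1/(ω+1). Then for any fixed X* ∈ R^{d×n}: E‖H⁺ − X*‖_F² ≤ (1−α)‖H − X*‖_F² + α‖X − X*‖_F². -/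
/-!
Column by column this is a statement about one random vector `q` with mean `v` and
`E‖q - v‖² ≤ ω‖v‖²`, so that `E‖q‖² = E‖q - v‖² + ‖v‖² ≤ (ω + 1)‖v‖²`. Expanding the square,
`E‖h + α q‖² = ‖h‖² + 2α⟪h, v⟫ + α² E‖q‖² ≤ ‖h‖² + 2α⟪h, v⟫ + α‖v‖²` because `α²(ω + 1) = α`,
and the right-hand side is exactly `(1 - α)‖h‖² + α‖h + v‖²`. With `h = H - X*` and
`v = X - H` this is the claimed bound for each column, and the squared Frobenius norm is the sum
over columns.
-/

open MeasureTheory Finset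

section SecondMoment

variable {Ω E : Type*} [MeasurableSpace Ω] {μ : Measure Ω} [IsProbabilityMeasure μ]
  [NormedAddCommGroup E] [InnerProductSpace ℝ E] [CompleteSpace E]

open scoped RealInnerProductSpace

theorem integral_norm_add_sq {q : Ω → E} (hq : MemLp q 2 μ) (h : E) :
    ∫ t, ‖h + q t‖ ^ 2 ∂μ = ‖h‖ ^ 2 + 2 * ⟪h, ∫ t, q t ∂μ⟫ + ∫ t, ‖q t‖ ^ 2 ∂μ := by
  have hq₁ : Integrable q μ := hq.integrable one_le_two
  have hinner : Integrable (fun t => 2 * ⟪h, q t⟫) μ := (hq₁.const_inner h).const_mul 2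
  have hlin : Integrable (fun t => ‖h‖ ^ 2 + 2 * ⟪h, q t⟫) μ := (integrable_const _).add hinner
  simp_rw [norm_add_sq_real]
  rw [integral_add hlin (hq.integrable_norm_pow two_ne_zero),
    integral_add (integrable_const _) hinner, integral_const_mul, integral_inner hq₁,
    integral_const, probReal_univ, one_smul]

theorem integral_norm_sq_eq_integral_norm_sub_sq_add {q : Ω → E} {v : E} (hq : MemLp q 2 μ)
    (hmean : ∫ t, q t ∂μ = v) :
    ∫ t, ‖q t‖ ^ 2 ∂μ = ∫ t, ‖q t - v‖ ^ 2 ∂μ + ‖v‖ ^ 2 := by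
  have := integral_norm_add_sq hq (-v)
  simp only [neg_add_eq_sub, norm_neg, inner_neg_left, hmean, real_inner_self_eq_norm_sq] at this
  linarith

theorem integral_norm_add_smul_sq_le {q : Ω → E} {v : E} {ω : ℝ} (hq : MemLp q 2 μ)
    (hmean : ∫ t, q t ∂μ = v) (hvar : ∫ t, ‖q t - v‖ ^ 2 ∂μ ≤ ω * ‖v‖ ^ 2) (h : E) :
    ∫ t, ‖h + (ω + 1)⁻¹ • q t‖ ^ 2 ∂μ
      ≤ (1 - (ω + 1)⁻¹) * ‖h‖ ^ 2 + (ω + 1)⁻¹ * ‖h + v‖ ^ 2 := by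
  set α := (ω + 1)⁻¹
  have hα : α ^ 2 * (ω + 1) = α := by
    rw [sq, ← inv_inv (ω + 1), mul_self_mul_inv]
  have hsecond : ∫ t, ‖q t‖ ^ 2 ∂μ ≤ (ω + 1) * ‖v‖ ^ 2 := by
    rw [integral_norm_sq_eq_integral_norm_sub_sq_add hq hmean]
    linarith
  calc ∫ t, ‖h + α • q t‖ ^ 2 ∂μ
      = ‖h‖ ^ 2 + 2 * α * ⟪h, v⟫ + α ^ 2 * ∫ t, ‖q t‖ ^ 2 ∂μ := by
        rw [integral_norm_add_sq (q := fun t => α • q t) (hq.const_smul α), integral_smul, hmean,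
          inner_smul_right]
        simp only [norm_smul, mul_pow, Real.norm_eq_abs, sq_abs, integral_const_mul]
        ring
    _ ≤ ‖h‖ ^ 2 + 2 * α * ⟪h, v⟫ + α ^ 2 * ((ω + 1) * ‖v‖ ^ 2) := by gcongr
    _ = (1 - α) * ‖h‖ ^ 2 + α * ‖h + v‖ ^ 2 := by
        rw [norm_add_sq_real, ← mul_assoc, hα]
        ring

end SecondMoment

theorem memLp_toLp_of_integrable_sum_sq {Ω ι : Type*} [MeasurableSpace Ω] [Fintype ι]
    {μ : Measure Ω} {q : Ω → ι → ℝ} (hq : Integrable q μ)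
    (hq2 : Integrable (fun t => ∑ i, q t i ^ 2) μ) :
    MemLp (fun t => WithLp.toLp 2 (q t)) 2 μ := by
  have hmeas := ((EuclideanSpace.equiv ι ℝ).symm.toContinuousLinearMap.integrable_comp hq).1
  refine (memLp_two_iff_integrable_sq_norm hmeas).2 ?_
  simpa [EuclideanSpace.real_norm_sq_eq] using hq2

section Coordinates

variable {Ω ι : Type*} [MeasurableSpace Ω] {μ : Measure Ω} [IsProbabilityMeasure μ] [Fintype ι]
  {q : Ω → ι → ℝ}

theorem integrable_sum_add_mul_sq (hq : Integrable q μ)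
    (hq2 : Integrable (fun t => ∑ i, q t i ^ 2) μ) (h : ι → ℝ) (c : ℝ) :
    Integrable (fun t => ∑ i, (h i + c * q t i) ^ 2) μ := by
  have hmem := (memLp_const (μ := μ) (WithLp.toLp 2 h)).add
    ((memLp_toLp_of_integrable_sum_sq hq hq2).const_smul c)
  have := hmem.integrable_norm_pow two_ne_zero
  simpa [EuclideanSpace.real_norm_sq_eq] using this

theorem integral_sum_add_mul_sq_le {v : ι → ℝ} {ω : ℝ} (hq : Integrable q μ)
    (hq2 : Integrable (fun t => ∑ i, q t i ^ 2) μ) (hmean : ∫ t, q t ∂μ = v)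
    (hvar : ∫ t, ∑ i, (q t i - v i) ^ 2 ∂μ ≤ ω * ∑ i, v i ^ 2) (h : ι → ℝ) :
    ∫ t, ∑ i, (h i + (ω + 1)⁻¹ * q t i) ^ 2 ∂μ
      ≤ (1 - (ω + 1)⁻¹) * ∑ i, h i ^ 2 + (ω + 1)⁻¹ * ∑ i, (h i + v i) ^ 2 := by
  have hmean' : ∫ t, WithLp.toLp 2 (q t) ∂μ = WithLp.toLp 2 v := by
    simpa [hmean] using (EuclideanSpace.equiv ι ℝ).symm.integral_comp_comm (μ := μ) q
  have := integral_norm_add_smul_sq_le (memLp_toLp_of_integrable_sum_sq hq hq2) hmean'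
    (by simpa [EuclideanSpace.real_norm_sq_eq] using hvar) (WithLp.toLp 2 h)
  simpa [EuclideanSpace.real_norm_sq_eq] using this

end Coordinates

theorem h_update_contraction_general (d n : ℕ)
    (Ω : Type*) [MeasureSpace Ω] (μ : Measure Ω) [IsProbabilityMeasure μ]
    (Q : (Fin d → ℝ) → Ω → (Fin d → ℝ))
    (ω : ℝ)
    (hint₁ : ∀ v, Integrable (fun t => Q v t) μ)
    (hint₃ : ∀ v, Integrable (fun t => ∑ i, (Q v t i) ^ 2) μ)
    (hunbiased : ∀ v, ∫ t, Q v t ∂μ = v)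
    (hvar : ∀ v, ∫ t, ∑ i, (Q v t i - v i) ^ 2 ∂μ ≤ ω * ∑ i, (v i) ^ 2)
    (H X Xstar : Matrix (Fin d) (Fin n) ℝ)
    (α : ℝ) (hα : α = 1 / (ω + 1))
    (Hplus : Ω → Matrix (Fin d) (Fin n) ℝ)
    (hHplus : ∀ t i j, Hplus t i j = H i j + α * Q (fun i' => X i' j - H i' j) t i) :
    ∫ t, ∑ i, ∑ j, (Hplus t i j - Xstar i j) ^ 2 ∂μ
      ≤ (1 - α) * (∑ i, ∑ j, (H i j - Xstar i j) ^ 2)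
        + α * (∑ i, ∑ j, (X i j - Xstar i j) ^ 2) := by
  rw [one_div] at hα
  subst hα
  have hcols (t : Ω) : ∑ i, ∑ j, (Hplus t i j - Xstar i j) ^ 2
      = ∑ j, ∑ i, (H i j - Xstar i j + (ω + 1)⁻¹ * Q (fun i' => X i' j - H i' j) t i) ^ 2 := by
    rw [sum_comm]
    simp only [hHplus]
    congr! 3
    ring
  calc ∫ t, ∑ i, ∑ j, (Hplus t i j - Xstar i j) ^ 2 ∂μ
      = ∑ j, ∫ t, ∑ i, (H i j - Xstar i j
          + (ω + 1)⁻¹ * Q (fun i' => X i' j - H i' j) t i) ^ 2 ∂μ := by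
        simp_rw [hcols]
        exact integral_finsetSum _ fun j _ =>
          integrable_sum_add_mul_sq (hint₁ _) (hint₃ _) _ _
    _ ≤ ∑ j, ((1 - (ω + 1)⁻¹) * ∑ i, (H i j - Xstar i j) ^ 2
          + (ω + 1)⁻¹ * ∑ i, (H i j - Xstar i j + (X i j - H i j)) ^ 2) :=
        sum_le_sum fun j _ => integral_sum_add_mul_sq_le (hint₁ _) (hint₃ _)
          (hunbiased _) (hvar _) _
    _ = _ := by
        simp only [sub_add_sub_cancel', sum_add_distrib, ← mul_sum]
        rw [sum_comm, sum_comm (f := fun i j => (X i j - Xstar i j) ^ 2)]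

/-- Variance-reduction step for the quantization memory: with
`H⁺ = H + α·Q(X − H)` (the unbiased `ω`-quantizer `Q` applied columnwise) and
`α = 1/(ω+1)`, one has
`E‖H⁺ − X*‖_F² ≤ (1−α)‖H − X*‖_F² + α‖X − X*‖_F²`. -/
theorem h_update_contraction (d n : ℕ)
    (Ω : Type*) [MeasureSpace Ω] (μ : Measure Ω) [IsProbabilityMeasure μ]
    (Q : (Fin d → ℝ) → Ω → (Fin d → ℝ))
    (ω : ℝ) (hω : 0 ≤ ω)
    (hint₁ : ∀ v, Integrable (fun t => Q v t) μ)
    (hint₂ : ∀ v, Integrable (fun t => ∑ i, (Q v t i - v i) ^ 2) μ)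
    (hint₃ : ∀ v, Integrable (fun t => ∑ i, (Q v t i) ^ 2) μ)
    (hunbiased : ∀ v, ∫ t, Q v t ∂μ = v)
    (hvar : ∀ v, ∫ t, ∑ i, (Q v t i - v i) ^ 2 ∂μ ≤ ω * ∑ i, (v i) ^ 2)
    (H X Xstar : Matrix (Fin d) (Fin n) ℝ)
    (α : ℝ) (hα : α = 1 / (ω + 1))
    (Hplus : Ω → Matrix (Fin d) (Fin n) ℝ)
    (hHplus : ∀ t i j, Hplus t i j = H i j + α * Q (fun i' => X i' j - H i' j) t i) :
    ∫ t, ∑ i, ∑ j, (Hplus t i j - Xstar i j) ^ 2 ∂μ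
      ≤ (1 - α) * (∑ i, ∑ j, (H i j - Xstar i j) ^ 2)
        + α * (∑ i, ∑ j, (X i j - Xstar i j) ^ 2) :=
  h_update_contraction_general d n Ω μ Q ω hint₁ hint₃ hunbiased hvar H X Xstar α hα Hplus hHplus
end

section
/- Let f(x) = (1/m) Σ_{j=1}^m f_j(x) with each f_j convex and L-smooth, x* a point, j sampled uniformly, and g = ∇f_j(x) − ∇f_j(w) + ∇f(w). Then E‖g − ∇f(x*)‖² ≤ 4L·B_f(x,x*) + 4L·B_f(w,x*), where the inequality (1/m)Σ_j ‖∇f_j(x) − ∇f_j(x*)‖² ≤ 2L·B_f(x,x*) is assumed for all x. -/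
open Finset

noncomputable section

variable {E : Type*} [NormedAddCommGroup E] [InnerProductSpace ℝ E] [CompleteSpace E]

/-- The finite-sum average `f = (1/m) Σⱼ fⱼ`. -/
def favg (m : ℕ) (fj : Fin m → E → ℝ) (y : E) : ℝ := ((m : ℝ))⁻¹ * ∑ j, fj j y

/-- The gradient of the average, `∇f = (1/m) Σⱼ ∇fⱼ`. -/
def gavg (m : ℕ) (fj : Fin m → E → ℝ) (y : E) : E :=
  ((m : ℝ))⁻¹ • ∑ j, gradient (fj j) y

/-- Bregman divergence of the average: `B_f(y,x*) = f(y) − f(x*) − ⟨∇f(x*), y−x*⟩`. -/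
def BregAvg (m : ℕ) (fj : Fin m → E → ℝ) (y xstar : E) : ℝ :=
  favg m fj y - favg m fj xstar - inner ℝ (gavg m fj xstar) (y - xstar)

/-!
With `aⱼ = ∇fⱼ(x) − ∇fⱼ(x*)` and `bⱼ = ∇fⱼ(w) − ∇fⱼ(x*)`, the centred SVRG estimator is
`g − ∇f(x*) = aⱼ − (bⱼ − 𝔼 b)`. Hence `‖u − v‖² ≤ 2‖u‖² + 2‖v‖²` and `𝔼‖b − 𝔼 b‖² ≤ 𝔼‖b‖²`
bound its second moment by `2 𝔼‖a‖² + 2 𝔼‖b‖²`, and the averaged smoothness bound turns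
each term into `2L` times a Bregman divergence.
-/

section Variance

variable {ι F : Type*} [SeminormedAddCommGroup F]

theorem norm_sub_sq_le_two_mul_add (a b : F) : ‖a - b‖ ^ 2 ≤ 2 * (‖a‖ ^ 2 + ‖b‖ ^ 2) :=
  (pow_le_pow_left₀ (norm_nonneg _) (norm_sub_le a b) 2).trans (add_sq_le ..)

variable [InnerProductSpace ℝ F]

-- For `s = ∅` both sides are `0`, as `(0 : ℝ)⁻¹ = 0`.
theorem Finset.card_smul_inv_card_smul_sum (s : Finset ι) (b : ι → F) :
    (#s : ℝ) • ((#s : ℝ)⁻¹ • ∑ i ∈ s, b i) = ∑ i ∈ s, b i := by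
  rcases s.eq_empty_or_nonempty with rfl | hs
  · simp
  · rw [smul_inv_smul₀ (by exact_mod_cast hs.card_pos.ne')]

theorem Finset.sum_norm_sub_average_sq (s : Finset ι) (b : ι → F) :
    ∑ i ∈ s, ‖b i - (#s : ℝ)⁻¹ • ∑ j ∈ s, b j‖ ^ 2
      = ∑ i ∈ s, ‖b i‖ ^ 2 - #s * ‖(#s : ℝ)⁻¹ • ∑ j ∈ s, b j‖ ^ 2 := by
  set μ := (#s : ℝ)⁻¹ • ∑ j ∈ s, b j
  have hcross : ∑ i ∈ s, inner ℝ (b i) μ = #s * ‖μ‖ ^ 2 := by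
    rw [← sum_inner, ← s.card_smul_inv_card_smul_sum b, real_inner_smul_left,
      real_inner_self_eq_norm_sq]
  simp only [norm_sub_sq_real, sum_add_distrib, sum_sub_distrib, sum_const, nsmul_eq_mul,
    ← mul_sum, hcross]
  ring

theorem Finset.sum_norm_sub_average_sq_le (s : Finset ι) (b : ι → F) :
    ∑ i ∈ s, ‖b i - (#s : ℝ)⁻¹ • ∑ j ∈ s, b j‖ ^ 2 ≤ ∑ i ∈ s, ‖b i‖ ^ 2 := by
  rw [sum_norm_sub_average_sq]
  have : 0 ≤ (#s : ℝ) * ‖(#s : ℝ)⁻¹ • ∑ j ∈ s, b j‖ ^ 2 := by positivity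
  linarith

theorem Finset.sum_norm_sub_sub_average_sq_le (s : Finset ι) (a b : ι → F) :
    ∑ i ∈ s, ‖a i - (b i - (#s : ℝ)⁻¹ • ∑ j ∈ s, b j)‖ ^ 2
      ≤ 2 * ∑ i ∈ s, ‖a i‖ ^ 2 + 2 * ∑ i ∈ s, ‖b i‖ ^ 2 :=
  calc ∑ i ∈ s, ‖a i - (b i - (#s : ℝ)⁻¹ • ∑ j ∈ s, b j)‖ ^ 2
      ≤ ∑ i ∈ s, 2 * (‖a i‖ ^ 2 + ‖b i - (#s : ℝ)⁻¹ • ∑ j ∈ s, b j‖ ^ 2) :=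
        sum_le_sum fun i _ ↦ norm_sub_sq_le_two_mul_add _ _
    _ = 2 * ∑ i ∈ s, ‖a i‖ ^ 2 + 2 * ∑ i ∈ s, ‖b i - (#s : ℝ)⁻¹ • ∑ j ∈ s, b j‖ ^ 2 := by
        rw [← mul_sum, sum_add_distrib, mul_add]
    _ ≤ 2 * ∑ i ∈ s, ‖a i‖ ^ 2 + 2 * ∑ i ∈ s, ‖b i‖ ^ 2 := by
        linarith [s.sum_norm_sub_average_sq_le b]

end Variance

theorem gavg_sub_gavg (m : ℕ) (fj : Fin m → E → ℝ) (y z : E) :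
    gavg m fj y - gavg m fj z = (m : ℝ)⁻¹ • ∑ j, (gradient (fj j) y - gradient (fj j) z) := by
  rw [gavg, gavg, ← smul_sub, ← sum_sub_distrib]

theorem svrg_gradient_variance_bound_general (m : ℕ)
    (fj : Fin m → E → ℝ) (L : ℝ)
    (x w xstar : E)
    (havg : ∀ y : E, ((m : ℝ))⁻¹ *
        ∑ j, ‖gradient (fj j) y - gradient (fj j) xstar‖ ^ 2
      ≤ 2 * L * BregAvg m fj y xstar) :
    ((m : ℝ))⁻¹ * ∑ j, ‖gradient (fj j) x - gradient (fj j) w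
          + gavg m fj w - gavg m fj xstar‖ ^ 2
      ≤ 4 * L * BregAvg m fj x xstar + 4 * L * BregAvg m fj w xstar := by
  set a : Fin m → E := fun j ↦ gradient (fj j) x - gradient (fj j) xstar
  set b : Fin m → E := fun j ↦ gradient (fj j) w - gradient (fj j) xstar
  have hsplit : ∀ j, gradient (fj j) x - gradient (fj j) w + gavg m fj w - gavg m fj xstar
      = a j - (b j - (#(univ : Finset (Fin m)) : ℝ)⁻¹ • ∑ i, b i) := by
    intro j
    rw [add_sub_assoc, gavg_sub_gavg, card_univ, Fintype.card_fin]
    simp only [a, b]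
    abel
  have hsum := (univ : Finset (Fin m)).sum_norm_sub_sub_average_sq_le a b
  simp only [← hsplit] at hsum
  calc (m : ℝ)⁻¹ * ∑ j, ‖gradient (fj j) x - gradient (fj j) w
          + gavg m fj w - gavg m fj xstar‖ ^ 2
      ≤ 2 * ((m : ℝ)⁻¹ * ∑ j, ‖a j‖ ^ 2) + 2 * ((m : ℝ)⁻¹ * ∑ j, ‖b j‖ ^ 2) := by
        rw [mul_left_comm, mul_left_comm 2, ← mul_add]
        gcongr
    _ ≤ 4 * L * BregAvg m fj x xstar + 4 * L * BregAvg m fj w xstar := by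
        linarith [havg x, havg w]

/-- SVRG variance bound: with `g = ∇f_j(x) − ∇f_j(w) + ∇f(w)` for uniform `j`,
`E‖g − ∇f(x*)‖² ≤ 4L·B_f(x,x*) + 4L·B_f(w,x*)`, assuming the averaged
smoothness bound `(1/m)Σⱼ‖∇fⱼ(y) − ∇fⱼ(x*)‖² ≤ 2L·B_f(y,x*)` for all `y`. -/
theorem svrg_gradient_variance_bound (m : ℕ) (hm : 0 < m)
    (fj : Fin m → E → ℝ) (L : ℝ) (hL : 0 < L)
    (hdiff : ∀ j, Differentiable ℝ (fj j))
    (hconv : ∀ j, ConvexOn ℝ Set.univ (fj j))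
    (hsmooth : ∀ j, LipschitzWith (Real.toNNReal L) (gradient (fj j)))
    (x w xstar : E)
    (havg : ∀ y : E, ((m : ℝ))⁻¹ *
        ∑ j, ‖gradient (fj j) y - gradient (fj j) xstar‖ ^ 2
      ≤ 2 * L * BregAvg m fj y xstar) :
    ((m : ℝ))⁻¹ * ∑ j, ‖gradient (fj j) x - gradient (fj j) w
          + gavg m fj w - gavg m fj xstar‖ ^ 2
      ≤ 4 * L * BregAvg m fj x xstar + 4 * L * BregAvg m fj w xstar :=
  svrg_gradient_variance_bound_general m fj L x w xstar havg

end
end
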